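/- Let A ∈ R^{m×n}, y ∈ {0,1}^n with Ay = c, and suppose n‖A⁺(1-2ε)‖ > √(n-1), where ε satisfies the error-rate relation c = nε - W·1_n with A = 1 - 2W. Then any ỹ ∈ [0,1]^n with Aỹ = c differs from 1 - y in Euclidean norm by more than √(n-1); in particular ỹ ≠ 1 - y. -/

import Mathlib

open Matrix

/-- The four Penrose conditions characterizing the Moore–Penrose pseudoinverse. -/
def IsMoorePenrose {m n : ℕ} (A : Matrix (Fin m) (Fin n) ℝ)
    (Ap : Matrix (Fin n) (Fin m) ℝ) : Prop :=
  A * Ap * A = A ∧ Ap * A * Ap = Ap ∧ (A * Ap)ᵀ = A * Ap ∧ (Ap * A)ᵀ = Ap * A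

/-- Euclidean norm of a vector. -/
noncomputable def enorm {k : ℕ} (v : Fin k → ℝ) : ℝ := Real.sqrt (∑ i, v i ^ 2)

/-!
Both `ỹ` and `y` solve `A x = c`, and `A 1 = n - 2 W 1`, so
`A (ỹ - (1 - y)) = 2 c - A 1 = -n (1 - 2 ε)`. Since `A⁺ A` is an orthogonal projection it does
not increase the Euclidean norm, hence
`‖ỹ - (1 - y)‖ ≥ ‖A⁺ A (ỹ - (1 - y))‖ = n ‖A⁺ (1 - 2 ε)‖ > √(n - 1)`.
-/

lemma enorm_eq_sqrt_dotProduct {k : ℕ} (v : Fin k → ℝ) : _root_.enorm v = √(v ⬝ᵥ v) := by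
  simp only [_root_.enorm, dotProduct, sq]

lemma enorm_smul_eq_abs_mul {k : ℕ} (a : ℝ) (v : Fin k → ℝ) :
    _root_.enorm (a • v) = |a| * _root_.enorm v := by
  rw [enorm_eq_sqrt_dotProduct, enorm_eq_sqrt_dotProduct, smul_dotProduct, dotProduct_smul,
    smul_eq_mul, smul_eq_mul, ← mul_assoc, ← sq, Real.sqrt_mul (sq_nonneg a), Real.sqrt_sq_eq_abs]

lemma dotProduct_mulVec_self_of_isIdempotentElem {ι R : Type*} [Fintype ι] [CommSemiring R]
    {P : Matrix ι ι R} (hidem : IsIdempotentElem P) (hsymm : Pᵀ = P) (v : ι → R) :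
    (P *ᵥ v) ⬝ᵥ (P *ᵥ v) = v ⬝ᵥ (P *ᵥ v) := by
  calc (P *ᵥ v) ⬝ᵥ (P *ᵥ v) = (v ᵥ* Pᵀ) ⬝ᵥ (P *ᵥ v) := by rw [vecMul_transpose]
    _ = v ⬝ᵥ (Pᵀ *ᵥ (P *ᵥ v)) := (dotProduct_mulVec _ _ _).symm
    _ = v ⬝ᵥ (P *ᵥ v) := by rw [hsymm, mulVec_mulVec, hidem.eq]

/-- Pythagoras for the orthogonal splitting `v = P v + (v - P v)`. -/
lemma enorm_mulVec_le_of_isIdempotentElem {k : ℕ} {P : Matrix (Fin k) (Fin k) ℝ}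
    (hidem : IsIdempotentElem P) (hsymm : Pᵀ = P) (v : Fin k → ℝ) :
    _root_.enorm (P *ᵥ v) ≤ _root_.enorm v := by
  rw [enorm_eq_sqrt_dotProduct, enorm_eq_sqrt_dotProduct]
  refine Real.sqrt_le_sqrt ?_
  have hpyth := dotProduct_mulVec_self_of_isIdempotentElem hidem hsymm v
  have hcomm : (P *ᵥ v) ⬝ᵥ v = v ⬝ᵥ (P *ᵥ v) := dotProduct_comm _ _
  have hnonneg : 0 ≤ (v - P *ᵥ v) ⬝ᵥ (v - P *ᵥ v) := dotProduct_self_star_nonneg _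
  simp only [sub_dotProduct, dotProduct_sub] at hnonneg
  linarith

lemma isIdempotentElem_mul_of_mul_mul_eq {ι κ R : Type*} [Fintype ι] [Fintype κ] [Semiring R]
    {A : Matrix ι κ R} {Ap : Matrix κ ι R} (h : A * Ap * A = A) : IsIdempotentElem (Ap * A) := by
  rw [IsIdempotentElem, Matrix.mul_assoc, ← Matrix.mul_assoc A, h]

lemma IsMoorePenrose.enorm_mulVec_mulVec_le {m n : ℕ} {A : Matrix (Fin m) (Fin n) ℝ}
    {Ap : Matrix (Fin n) (Fin m) ℝ} (hAp : IsMoorePenrose A Ap) (v : Fin n → ℝ) :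
    _root_.enorm (Ap *ᵥ (A *ᵥ v)) ≤ _root_.enorm v := by
  rw [mulVec_mulVec]
  exact enorm_mulVec_le_of_isIdempotentElem (isIdempotentElem_mul_of_mul_mul_eq hAp.1) hAp.2.2.2 v

lemma mulVec_one_apply_of_eq_one_sub_two_mul {m n : ℕ} {W A : Matrix (Fin m) (Fin n) ℝ}
    (hA : ∀ i j, A i j = 1 - 2 * W i j) (i : Fin m) :
    (A *ᵥ 1) i = n - 2 * ∑ j, W i j := by
  simp [mulVec, dotProduct, hA, Finset.sum_sub_distrib, Finset.mul_sum]

lemma mulVec_sub_one_sub_eq {m n : ℕ} {W A : Matrix (Fin m) (Fin n) ℝ}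
    (hA : ∀ i j, A i j = 1 - 2 * W i j) {ε c : Fin m → ℝ}
    (hc : ∀ i, c i = (n : ℝ) * ε i - ∑ j, W i j) {y yt : Fin n → ℝ}
    (hyc : A *ᵥ y = c) (hytc : A *ᵥ yt = c) :
    A *ᵥ (yt - (1 - y)) = (-(n : ℝ)) • fun i => 1 - 2 * ε i := by
  ext i
  rw [mulVec_sub, mulVec_sub, hyc, hytc]
  simp only [Pi.sub_apply, Pi.smul_apply, smul_eq_mul, hc,
    mulVec_one_apply_of_eq_one_sub_two_mul hA]
  ring

theorem stmt9_general {m n : ℕ} (W A : Matrix (Fin m) (Fin n) ℝ)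
    (Ap : Matrix (Fin n) (Fin m) ℝ) (hAp : IsMoorePenrose A Ap)
    (hA : ∀ i j, A i j = 1 - 2 * W i j)
    (y : Fin n → ℝ)
    (ε : Fin m → ℝ) (c : Fin m → ℝ)
    (hc : ∀ i, c i = (n : ℝ) * ε i - ∑ j, W i j)
    (hyc : A.mulVec y = c)
    (hbig : (n : ℝ) * _root_.enorm (Ap.mulVec (fun i => 1 - 2 * ε i)) > Real.sqrt ((n : ℝ) - 1))
    (yt : Fin n → ℝ)
    (hytc : A.mulVec yt = c) :
    _root_.enorm (fun j => yt j - (1 - y j)) > Real.sqrt ((n : ℝ) - 1) ∧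
      yt ≠ fun j => 1 - y j := by
  have hbound :
      (n : ℝ) * _root_.enorm (Ap *ᵥ fun i => 1 - 2 * ε i) ≤ _root_.enorm (yt - (1 - y)) := by
    have := hAp.enorm_mulVec_mulVec_le (yt - (1 - y))
    rwa [mulVec_sub_one_sub_eq hA hc hyc hytc, mulVec_smul, enorm_smul_eq_abs_mul, abs_neg,
      Nat.abs_cast] at this
  have hfar : _root_.enorm (yt - (1 - y)) > √((n : ℝ) - 1) := lt_of_lt_of_le hbig hbound
  refine ⟨hfar, fun hyt => ?_⟩
  rw [show yt - (1 - y) = 0 from sub_eq_zero.mpr hyt] at hfar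
  simp only [_root_.enorm, Pi.zero_apply, sq, mul_zero, Finset.sum_const_zero,
    Real.sqrt_zero] at hfar
  exact (Real.sqrt_nonneg _).not_gt hfar

theorem stmt9 {m n : ℕ} (W A : Matrix (Fin m) (Fin n) ℝ)
    (Ap : Matrix (Fin n) (Fin m) ℝ) (hAp : IsMoorePenrose A Ap)
    (hW : ∀ i j, W i j ∈ Set.Icc (0 : ℝ) 1)
    (hA : ∀ i j, A i j = 1 - 2 * W i j)
    (y : Fin n → ℝ) (hy : ∀ j, y j = 0 ∨ y j = 1)
    (ε : Fin m → ℝ) (c : Fin m → ℝ)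
    (hc : ∀ i, c i = (n : ℝ) * ε i - ∑ j, W i j)
    (hyc : A.mulVec y = c)
    (hbig : (n : ℝ) * _root_.enorm (Ap.mulVec (fun i => 1 - 2 * ε i)) > Real.sqrt ((n : ℝ) - 1))
    (yt : Fin n → ℝ) (hyt01 : ∀ j, yt j ∈ Set.Icc (0 : ℝ) 1)
    (hytc : A.mulVec yt = c) :
    _root_.enorm (fun j => yt j - (1 - y j)) > Real.sqrt ((n : ℝ) - 1) ∧
      yt ≠ fun j => 1 - y j :=
  stmt9_general W A Ap hAp hA y ε c hc hyc hbig yt hytc
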